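/- Let G be a locally compact group with left Haar measure, and let T be a bounded operator on L²(G) that commutes with right convolution by all f ∈ C_c(G) (i.e., T(φ*f) = (Tφ)*f). If T restricts to a bounded adjointable operator on the right Hilbert C*_r(G)-module completion of C_c(G) with norm ‖T‖_{C*_r→C*_r}, and is bounded on L²(G) with norm ‖T‖_{L²→L²}, then ‖T‖_{C*_r→C*_r} ≤ ‖T‖_{L²→L²}. -/

import Mathlib

open MeasureTheory
open scoped ENNReal

noncomputable section

/-- The predicate describing members of `C_c(G)`: continuous, compactly supported functions. -/
def IsCc {G : Type*} [TopologicalSpace G] (f : G → ℂ) : Prop :=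
  Continuous f ∧ HasCompactSupport f

/-- Convolution of two functions on a group with respect to a (left Haar) measure. -/
def convOn {G : Type*} [Group G] [MeasurableSpace G] (μ : Measure G)
    (f h : G → ℂ) : G → ℂ :=
  fun x => ∫ y, f y * h (y⁻¹ * x) ∂μ

/-- The reduced (`C*_r(G)`-) norm of a function `f`: the supremum of `‖f ⋆ h‖_{L²}` over all
`h ∈ C_c(G)` with `‖h‖_{L²} = 1`. -/
def reducedNorm {G : Type*} [Group G] [TopologicalSpace G] [MeasurableSpace G]
    (μ : Measure G) (f : G → ℂ) : ℝ≥0∞ :=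
  ⨆ h : {h : G → ℂ // IsCc h ∧ eLpNorm h 2 μ = 1}, eLpNorm (convOn μ f h.1) 2 μ

/-! Since `T` commutes with right convolutions, `(T f) ⋆ h = T (f ⋆ h)`, whose `L²`-norm is at most
`C ‖f ⋆ h‖₂ ≤ C ‖f‖_{C*_r}`. The only analytic input is that `C_c(G)` is closed under
convolution. -/

open scoped Pointwise

section
variable {G : Type*} [Group G] [TopologicalSpace G] [MeasurableSpace G] {μ : Measure G}
  {f h : G → ℂ}

lemma support_convOn_subset : Function.support (convOn μ f h) ⊆ tsupport f * tsupport h := by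
  intro x hx
  by_contra hmem
  refine hx (integral_eq_zero_of_ae (Filter.Eventually.of_forall fun y => ?_))
  by_contra hy
  obtain ⟨hfy, hhy⟩ := mul_ne_zero_iff.mp hy
  exact hmem ⟨y, subset_tsupport f hfy, y⁻¹ * x, subset_tsupport h hhy, mul_inv_cancel_left y x⟩

lemma convOn_le_reducedNorm (hh : IsCc h) (hh_norm : eLpNorm h 2 μ = 1) :
    eLpNorm (convOn μ f h) 2 μ ≤ reducedNorm μ f :=
  le_iSup (fun h' : {h : G → ℂ // IsCc h ∧ eLpNorm h 2 μ = 1} => eLpNorm (convOn μ f h'.1) 2 μ)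
    ⟨h, hh, hh_norm⟩

variable [IsTopologicalGroup G] [BorelSpace G] [IsFiniteMeasureOnCompacts μ]

lemma IsCc.continuous_convOn (hf : IsCc f) (hh : Continuous h) : Continuous (convOn μ f h) := by
  rw [← continuousOn_univ]
  refine continuousOn_integral_of_compact_support hf.2 ?_ fun x y _ hy => ?_
  · exact (hf.1.comp continuous_snd).mul (hh.comp (continuous_snd.inv.mul continuous_fst))
      |>.continuousOn
  · simp [image_eq_zero_of_notMem_tsupport hy]

lemma IsCc.convOn (hf : IsCc f) (hh : IsCc h) : IsCc (convOn μ f h) :=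
  ⟨hf.continuous_convOn hh.1,
    .of_support_subset_isCompact (hf.2.mul hh.2) support_convOn_subset⟩

end

theorem stmt_0_general {G : Type*} [Group G] [TopologicalSpace G] [IsTopologicalGroup G]
    [MeasurableSpace G] [BorelSpace G]
    (μ : Measure G) [μ.IsHaarMeasure]
    (T : (G → ℂ) →ₗ[ℂ] (G → ℂ))
    (hTcommute : ∀ φ f : G → ℂ, IsCc φ → IsCc f →
      T (convOn μ φ f) = convOn μ (T φ) f)
    (C : ℝ≥0∞)
    (hL2bound : ∀ φ : G → ℂ, IsCc φ → eLpNorm (T φ) 2 μ ≤ C * eLpNorm φ 2 μ) :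
    ∀ f : G → ℂ, IsCc f → reducedNorm μ (T f) ≤ C * reducedNorm μ f := by
  intro f hf
  refine iSup_le fun ⟨h, hh, hh_norm⟩ => ?_
  calc eLpNorm (convOn μ (T f) h) 2 μ
      = eLpNorm (T (convOn μ f h)) 2 μ := by rw [hTcommute f h hf hh]
    _ ≤ C * eLpNorm (convOn μ f h) 2 μ := hL2bound _ (hf.convOn hh)
    _ ≤ C * reducedNorm μ f := by gcongr; exact convOn_le_reducedNorm hh hh_norm

/-- Let `G` be a locally compact group with left Haar measure `μ` and let `T`
be a linear operator on `C_c(G)` commuting with right convolution by every `f ∈ C_c(G)`.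
If `T` is bounded for the `L²`-norm, with bound `C`, then `T` is bounded with the same bound
`C` for the reduced `C*_r(G)`-norm; in particular `‖T‖_{C*_r → C*_r} ≤ ‖T‖_{L² → L²}`. -/
theorem stmt_0 {G : Type*} [Group G] [TopologicalSpace G] [IsTopologicalGroup G]
    [LocallyCompactSpace G] [MeasurableSpace G] [BorelSpace G]
    (μ : Measure G) [μ.IsHaarMeasure]
    (T : (G → ℂ) →ₗ[ℂ] (G → ℂ))
    (hTcc : ∀ f, IsCc f → IsCc (T f))
    (hTcommute : ∀ φ f : G → ℂ, IsCc φ → IsCc f →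
      T (convOn μ φ f) = convOn μ (T φ) f)
    (C : ℝ≥0∞)
    (hL2bound : ∀ φ : G → ℂ, IsCc φ → eLpNorm (T φ) 2 μ ≤ C * eLpNorm φ 2 μ) :
    ∀ f : G → ℂ, IsCc f → reducedNorm μ (T f) ≤ C * reducedNorm μ f :=
  stmt_0_general μ T hTcommute C hL2bound
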